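/- arXiv:1806.08005 — 2 statements merged into one kernel-verified Lean document; each statement's English description precedes it below -/
import Mathlib

section
/- Fix μ > 0 and let Φ denote the standard normal cumulative distribution function. Then the function σ ↦ sup_{x>0} |Φ((x−μ)/σ) − Φ((ln x − ln μ)/(σ/μ))| is O(σ/μ) as σ → 0 from the right; that is, there exist C > 0 and δ > 0 such that for all 0 < σ < δ, sup_{x>0} |Φ((x−μ)/σ) − Φ((ln x − ln μ)/(σ/μ))| ≤ C·σ/μ. -/
/-!
With `s = σ / μ` and `y = x / μ` the two arguments of `Φ` are `a = log y / s ≤ b = (y - 1) / s`,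
which have the same sign. On an interval avoiding `0` the Gaussian density is at most
`(2π)^(-1/2) · 2 / u²`, so `Φ b - Φ a ≤ 1 / a - 1 / b = s · (1 / log y - 1 / (y - 1))`, and the
bracket is at most `1` because `log y ≥ 1 - 1 / y`. So the bound holds with `C = 1` for every
`σ > 0`.
-/

/-- The standard normal cumulative distribution function. -/
noncomputable def stdNormalCDF (t : ℝ) : ℝ :=
  (Real.sqrt (2 * Real.pi))⁻¹ * ∫ u in Set.Iic t, Real.exp (-u ^ 2 / 2)

open MeasureTheory Set Real

lemma integrable_exp_neg_sq_div_two : Integrable fun u : ℝ => exp (-u ^ 2 / 2) := by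
  simpa only [neg_div, div_eq_inv_mul, neg_mul, mul_neg] using
    integrable_exp_neg_mul_sq (show (0 : ℝ) < 2⁻¹ by norm_num)

lemma stdNormalCDF_sub (a b : ℝ) :
    stdNormalCDF b - stdNormalCDF a = (√(2 * π))⁻¹ * ∫ u in a..b, exp (-u ^ 2 / 2) := by
  rw [stdNormalCDF, stdNormalCDF, ← mul_sub, intervalIntegral.integral_Iic_sub_Iic
    integrable_exp_neg_sq_div_two.integrableOn integrable_exp_neg_sq_div_two.integrableOn]

lemma stdNormalCDF_monotone : Monotone stdNormalCDF := fun a b hab => by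
  have hsub := stdNormalCDF_sub a b
  have hnonneg : 0 ≤ ∫ u in a..b, exp (-u ^ 2 / 2) :=
    intervalIntegral.integral_nonneg hab fun u _ => (exp_pos _).le
  nlinarith [inv_nonneg.mpr (sqrt_nonneg (2 * π))]

lemma exp_neg_sq_div_two_le {u : ℝ} (hu : u ≠ 0) : exp (-u ^ 2 / 2) ≤ 2 * u ^ (-2 : ℤ) := by
  have hz : 0 < u ^ 2 / 2 := by positivity
  calc exp (-u ^ 2 / 2) = (exp (u ^ 2 / 2))⁻¹ := by rw [neg_div, exp_neg]
    _ ≤ (u ^ 2 / 2)⁻¹ := inv_anti₀ hz (by linarith [add_one_le_exp (u ^ 2 / 2)])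
    _ = 2 * u ^ (-2 : ℤ) := by rw [zpow_neg, inv_div, zpow_two, sq, div_eq_mul_inv]

lemma zero_notMem_uIcc_of_mul_pos {a b : ℝ} (h : 0 < a * b) : (0 : ℝ) ∉ uIcc a b := by
  rintro ⟨h₁, h₂⟩
  rcases le_total a b with hab | hab
  · simp only [inf_of_le_left hab, sup_of_le_right hab] at h₁ h₂
    nlinarith
  · simp only [inf_of_le_right hab, sup_of_le_left hab] at h₁ h₂
    nlinarith

lemma stdNormalCDF_sub_le_inv_sub_inv {a b : ℝ} (hab : a ≤ b) (h : 0 < a * b) :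
    stdNormalCDF b - stdNormalCDF a ≤ a⁻¹ - b⁻¹ := by
  have h0 := zero_notMem_uIcc_of_mul_pos h
  have hint : ∫ u in a..b, exp (-u ^ 2 / 2) ≤ 2 * (a⁻¹ - b⁻¹) := by
    calc ∫ u in a..b, exp (-u ^ 2 / 2) ≤ ∫ u in a..b, 2 * u ^ (-2 : ℤ) := by
          refine intervalIntegral.integral_mono_on hab
            integrable_exp_neg_sq_div_two.intervalIntegrable
            ((intervalIntegral.intervalIntegrable_zpow (Or.inr h0)).const_mul 2) fun u hu => ?_
          exact exp_neg_sq_div_two_le fun hu0 => h0 (hu0 ▸ Icc_subset_uIcc hu)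
      _ = 2 * (a⁻¹ - b⁻¹) := by
          rw [intervalIntegral.integral_const_mul,
            integral_zpow (Or.inr ⟨by norm_num, h0⟩)]
          norm_num
          ring
  have hc : (√(2 * π))⁻¹ ≤ 2⁻¹ := by
    refine inv_anti₀ (by norm_num) (le_sqrt_of_sq_le ?_)
    nlinarith [pi_gt_three]
  have hnonneg : 0 ≤ ∫ u in a..b, exp (-u ^ 2 / 2) :=
    intervalIntegral.integral_nonneg hab fun u _ => (exp_pos _).le
  rw [stdNormalCDF_sub]
  nlinarith [inv_nonneg.mpr (sqrt_nonneg (2 * π))]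

lemma log_mul_sub_one_pos {y : ℝ} (hy : 0 < y) (hy1 : y ≠ 1) : 0 < log y * (y - 1) := by
  rcases hy1.lt_or_gt with h | h
  · exact mul_pos_of_neg_of_neg (log_neg hy h) (by linarith)
  · exact mul_pos (log_pos h) (by linarith)

/-- Clearing the denominators, this is `1 - y⁻¹ ≤ log y`. -/
lemma inv_log_sub_inv_sub_one_le_one {y : ℝ} (hy : 0 < y) (hy1 : y ≠ 1) :
    (log y)⁻¹ - (y - 1)⁻¹ ≤ 1 := by
  have hprod := log_mul_sub_one_pos hy hy1
  have hlog := one_sub_inv_le_log_of_pos hy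
  rw [inv_sub_inv (left_ne_zero_of_mul hprod.ne') (right_ne_zero_of_mul hprod.ne'),
    div_le_one hprod]
  have : y * (1 - y⁻¹) = y - 1 := by field_simp
  nlinarith

/-- For fixed μ > 0, the supremum over `x > 0` of
`|Φ((x−μ)/σ) − Φ((ln x − ln μ)/(σ/μ))|` is `O(σ/μ)` as `σ → 0⁺`: there exist
`C > 0` and `δ > 0` such that for all `0 < σ < δ` and all `x > 0` the difference
is bounded by `C·σ/μ`. -/
theorem lognormal_approximation_bigO (μ : ℝ) (hμ : 0 < μ) :
    ∃ C > (0 : ℝ), ∃ δ > (0 : ℝ), ∀ σ : ℝ, 0 < σ → σ < δ →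
      ∀ x > (0 : ℝ),
        |stdNormalCDF ((x - μ) / σ) - stdNormalCDF ((Real.log x - Real.log μ) / (σ / μ))| ≤
          C * σ / μ := by
  refine ⟨1, one_pos, 1, one_pos, fun σ hσ _ x hx => ?_⟩
  set s := σ / μ with hs_def
  set y := x / μ with hy_def
  have hs : 0 < s := div_pos hσ hμ
  have hy : 0 < y := div_pos hx hμ
  have hnormal : (x - μ) / σ = (y - 1) / s := by rw [hs_def, hy_def]; field_simp
  have hlog : log x - log μ = log y := (log_div hx.ne' hμ.ne').symm
  rw [hnormal, hlog]
  rcases eq_or_ne y 1 with hy1 | hy1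
  · simp only [hy1, sub_self, log_one, zero_div, abs_zero]
    positivity
  have hab : log y / s ≤ (y - 1) / s := by gcongr; exact log_le_sub_one_of_pos hy
  have hprod : 0 < log y / s * ((y - 1) / s) := by
    rw [div_mul_div_comm]; exact div_pos (log_mul_sub_one_pos hy hy1) (by positivity)
  rw [abs_of_nonneg (sub_nonneg.mpr (stdNormalCDF_monotone hab))]
  calc _ ≤ (log y / s)⁻¹ - ((y - 1) / s)⁻¹ := stdNormalCDF_sub_le_inv_sub_inv hab hprod
    _ = s * ((log y)⁻¹ - (y - 1)⁻¹) := by rw [inv_div, inv_div]; ring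
    _ ≤ s * 1 := mul_le_mul_of_nonneg_left (inv_log_sub_inv_sub_one_le_one hy hy1) hs.le
    _ = 1 * σ / μ := by rw [hs_def]; ring
end

section
/- Let R, V, s be real numbers with R > 0, V > 0, s > 0, define γ_min = 2s + 2(s(1+s)V/R² + √(s(1+s)(1+sV/R²)(1+(1+s)V/R²))), D(γ) = (γ+2)²R² − 4(γ+1)(1+s)(R²+sV), X_±(γ) = ((γ+2)R ± √(D(γ)))/(2(1+s)), and Y_±(γ) = (γ/s)(X_±(γ)·R − R² − sV). Then for every γ > γ_min, the function γ ↦ Y_+(γ)/Y_−(γ) is differentiable at γ with derivative 2·(R/√(D(γ)))·(Y_+(γ)/Y_−(γ)). -/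
/-!
Put `b(γ) = (γ+2)R² − 2(1+s)(R²+sV)`. Then `R²·D = b² − K` with the constant
`K = 4(1+s)(R²+sV)·s(R²+(1+s)V) > 0`, and `Y_± = γ/(2s(1+s))·(b ± √(b² − K))`, so that
`Y_+/Y_− = φ(b)` with `φ(t) = (t + √(t² − K))/(t − √(t² − K))`. The logarithmic derivative of `φ`
is `2/√(t² − K)`, and `b' = R²`, which gives `2R²/(R√D) = 2R/√D`.
With `M = s(R²+(1+s)V)` one has `γ_min·R² = 2M + 2√(M(M+R²))` and
`R²·D = (γR² − 2M)² − 4M(M+R²)`, so `D > 0` beyond `γ_min`.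
-/

open Real

theorem hasDerivAt_add_sqrt_div_sub_sqrt {K t : ℝ} (hK : K ≠ 0) (ht : 0 < t ^ 2 - K) :
    HasDerivAt (fun x => (x + √(x ^ 2 - K)) / (x - √(x ^ 2 - K)))
      (2 / √(t ^ 2 - K) * ((t + √(t ^ 2 - K)) / (t - √(t ^ 2 - K)))) t := by
  set w := √(t ^ 2 - K) with hw
  have hw_pos : 0 < w := sqrt_pos.mpr ht
  have hw_sq : w ^ 2 = t ^ 2 - K := sq_sqrt ht.le
  have hden : t - w ≠ 0 := by
    intro h
    apply hK
    nlinarith [show w = t by linarith]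
  have hsqrt : HasDerivAt (fun x => √(x ^ 2 - K)) (t / w) t := by
    convert ((hasDerivAt_pow 2 t).sub_const K).sqrt ht.ne' using 1
    field_simp
    norm_num [hw]
    ring
  refine (((hasDerivAt_id' t).add hsqrt).div ((hasDerivAt_id' t).sub hsqrt) hden).congr_deriv ?_
  simp only [Pi.add_apply, Pi.sub_apply, ← hw]
  field_simp
  ring

theorem gammaMin_mul_sq {R V s : ℝ} (hR : R ≠ 0) :
    (2 * s + 2 * (s * (1 + s) * V / R ^ 2 +
      √(s * (1 + s) * (1 + s * V / R ^ 2) * (1 + (1 + s) * V / R ^ 2)))) * R ^ 2 =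
      2 * (s * (R ^ 2 + (1 + s) * V)) +
        2 * √(s * (R ^ 2 + (1 + s) * V) * (s * (R ^ 2 + (1 + s) * V) + R ^ 2)) := by
  have hprod : s * (R ^ 2 + (1 + s) * V) * (s * (R ^ 2 + (1 + s) * V) + R ^ 2) =
      s * (1 + s) * (1 + s * V / R ^ 2) * (1 + (1 + s) * V / R ^ 2) * (R ^ 2) ^ 2 := by
    field_simp
    ring
  have hsqrt : √(s * (R ^ 2 + (1 + s) * V) * (s * (R ^ 2 + (1 + s) * V) + R ^ 2)) =
      √(s * (1 + s) * (1 + s * V / R ^ 2) * (1 + (1 + s) * V / R ^ 2)) * R ^ 2 := by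
    rw [hprod, sqrt_mul' _ (by positivity), sqrt_sq (by positivity)]
  rw [hsqrt]
  field_simp
  ring

theorem discr_pos_of_gammaMin_lt {R V s γ : ℝ} (hR : R ≠ 0) (hV : 0 ≤ V) (hs : 0 ≤ s)
    (hγ : 2 * s + 2 * (s * (1 + s) * V / R ^ 2 +
      √(s * (1 + s) * (1 + s * V / R ^ 2) * (1 + (1 + s) * V / R ^ 2))) < γ) :
    0 < γ ∧ 0 < (γ + 2) ^ 2 * R ^ 2 - 4 * (γ + 1) * (1 + s) * (R ^ 2 + s * V) := by
  set M := s * (R ^ 2 + (1 + s) * V)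
  have hM : 0 ≤ M := by positivity
  have hlt : 2 * M + 2 * √(M * (M + R ^ 2)) < γ * R ^ 2 := by
    rw [← gammaMin_mul_sq hR]
    exact mul_lt_mul_of_pos_right hγ (by positivity)
  have hroot_sq := sq_sqrt (by positivity : 0 ≤ M * (M + R ^ 2))
  have hroot_nonneg := sqrt_nonneg (M * (M + R ^ 2))
  have hdiscr : ((γ + 2) ^ 2 * R ^ 2 - 4 * (γ + 1) * (1 + s) * (R ^ 2 + s * V)) * R ^ 2 =
      (γ * R ^ 2 - 2 * M) ^ 2 - 4 * (M * (M + R ^ 2)) := by ring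
  constructor
  · exact pos_of_mul_pos_left (by nlinarith) (sq_nonneg R)
  · exact pos_of_mul_pos_left (by nlinarith) (sq_nonneg R)

/-- For `R > 0`, `V > 0`, `s > 0`, with
`D(γ) = (γ+2)²R² − 4(γ+1)(1+s)(R²+sV)`, `X_±(γ) = ((γ+2)R ± √(D(γ)))/(2(1+s))`
and `Y_±(γ) = (γ/s)(X_±(γ)R − R² − sV)`, at every `γ > γ_min` the ratio
`Y_+/Y_−` is differentiable with derivative `2·(R/√(D(γ)))·(Y_+(γ)/Y_−(γ))`. -/
theorem deriv_ratio_Yplus_Yminus (R V s γmin : ℝ)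
    (hR : 0 < R) (hV : 0 < V) (hs : 0 < s)
    (hγmin : γmin = 2 * s + 2 * (s * (1 + s) * V / R ^ 2 +
      Real.sqrt (s * (1 + s) * (1 + s * V / R ^ 2) * (1 + (1 + s) * V / R ^ 2))))
    (D Xp Xm Yp Ym : ℝ → ℝ)
    (hD : ∀ γ, D γ = (γ + 2) ^ 2 * R ^ 2 - 4 * (γ + 1) * (1 + s) * (R ^ 2 + s * V))
    (hXp : ∀ γ, Xp γ = ((γ + 2) * R + Real.sqrt (D γ)) / (2 * (1 + s)))
    (hXm : ∀ γ, Xm γ = ((γ + 2) * R - Real.sqrt (D γ)) / (2 * (1 + s)))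
    (hYp : ∀ γ, Yp γ = (γ / s) * (Xp γ * R - R ^ 2 - s * V))
    (hYm : ∀ γ, Ym γ = (γ / s) * (Xm γ * R - R ^ 2 - s * V)) :
    ∀ γ > γmin,
      HasDerivAt (fun g => Yp g / Ym g)
        (2 * (R / Real.sqrt (D γ)) * (Yp γ / Ym γ)) γ := by
  intro γ hγ
  obtain ⟨hγ_pos, hD_pos⟩ := discr_pos_of_gammaMin_lt hR.ne' hV.le hs.le (hγmin ▸ hγ)
  rw [← hD] at hD_pos
  set b : ℝ → ℝ := fun g => (g + 2) * R ^ 2 - 2 * (1 + s) * (R ^ 2 + s * V)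
  set K := 4 * (1 + s) * (R ^ 2 + s * V) * (s * (R ^ 2 + (1 + s) * V))
  have hK : K ≠ 0 := by positivity
  have hbK (g : ℝ) : b g ^ 2 - K = R ^ 2 * D g := by rw [hD]; ring
  have hsqrt (g : ℝ) : √(b g ^ 2 - K) = R * √(D g) := by
    rw [hbK, sqrt_mul (sq_nonneg R), sqrt_sq hR.le]
  have hratio (g : ℝ) (hg : g ≠ 0) :
      Yp g / Ym g = (b g + √(b g ^ 2 - K)) / (b g - √(b g ^ 2 - K)) := by
    have hc : g / (2 * s * (1 + s)) ≠ 0 := by positivity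
    have hYp' : Yp g = g / (2 * s * (1 + s)) * (b g + R * √(D g)) := by
      rw [hYp, hXp]; simp only [b]; field_simp; ring
    have hYm' : Ym g = g / (2 * s * (1 + s)) * (b g - R * √(D g)) := by
      rw [hYm, hXm]; simp only [b]; field_simp; ring
    rw [hYp', hYm', hsqrt, mul_div_mul_left _ _ hc]
  have hb : HasDerivAt b (R ^ 2) γ :=
    ((((hasDerivAt_id' γ).add_const 2).mul_const (R ^ 2)).sub_const _).congr_deriv (one_mul _)
  have hcomp := (hasDerivAt_add_sqrt_div_sub_sqrt hK (by rw [hbK]; positivity)).comp γ hb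
  refine (hcomp.congr_of_eventuallyEq ?_).congr_deriv ?_
  · filter_upwards [eventually_ne_nhds hγ_pos.ne'] with g hg using hratio g hg
  · rw [hratio γ hγ_pos.ne', hsqrt]
    field_simp
end
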